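/- For all λ₁, λ₂ ∈ ℝᴺ such that λ₂ − λ₁ lies in the column space of Z, g(λ₂) − g(λ₁) ≤ ⟨∇g(λ₁), λ₂ − λ₁⟩ + (1/(2 μ_g)) ‖∇g(λ₁) − ∇g(λ₂)‖², where μ_g = σ/𝓛. -/

import Mathlib

open Matrix Set
open scoped RealInnerProductSpace

noncomputable section

/-- The positive semidefinite square root of a positive semidefinite matrix
(the definition `Matrix.PosSemidef.sqrt` of the older Mathlib, since removed). -/
def Matrix.PosSemidef.sqrt {n : Type*} [Fintype n] [DecidableEq n]
    {A : Matrix n n ℝ} (hA : A.PosSemidef) : Matrix n n ℝ :=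
  hA.1.eigenvectorUnitary.1 * diagonal ((↑) ∘ (Real.sqrt ∘ hA.1.eigenvalues)) *
    (star hA.1.eigenvectorUnitary : Matrix n n ℝ)

/-- The augmented Lagrangian `L̃_α(x, λ) = f(x) + ⟨λ, Z^{1/2} x⟩ + (α/2) xᵀ Z x`,
where `Z^{1/2}` is the positive semidefinite square root of `Z`. -/
def augLag (N : ℕ) (f : EuclideanSpace ℝ (Fin N) → ℝ) (α : ℝ)
    (Z : Matrix (Fin N) (Fin N) ℝ) (hZ : Z.PosSemidef)
    (x lam : EuclideanSpace ℝ (Fin N)) : ℝ :=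
  f x + ⟪lam, Matrix.toEuclideanLin hZ.sqrt x⟫ +
    α / 2 * ⟪x, Matrix.toEuclideanLin Z x⟫

/-- For `λ₂ − λ₁` in the column space of `Z`: `g(λ₂) − g(λ₁) ≤ ⟨∇g(λ₁), λ₂ − λ₁⟩ + (1/(2μ_g)) ‖∇g(λ₁) − ∇g(λ₂)‖²`, with `μ_g = σ/𝓛` and `∇g(λ) = Z^{1/2} x*(λ)`. -/
theorem dual_cocoercivity_ineq
    (N : ℕ) (hN : 0 < N)
    (f : EuclideanSpace ℝ (Fin N) → ℝ) (μ L : ℝ) (hμ : 0 < μ) (hL : 0 < L)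
    (hf : ContDiff ℝ 2 f)
    (hsc : StrongConvexOn Set.univ μ f)
    (hlip : LipschitzWith L.toNNReal (gradient f))
    (Z : Matrix (Fin N) (Fin N) ℝ) (hZ : Z.PosSemidef) (hZ0 : Z ≠ 0)
    (ρ σ : ℝ)
    (hρ : ρ ∈ spectrum ℝ Z) (hρmax : ∀ c ∈ spectrum ℝ Z, c ≤ ρ)
    (hσ : σ ∈ spectrum ℝ Z) (hσpos : 0 < σ) (hσmin : ∀ c ∈ spectrum ℝ Z, 0 < c → σ ≤ c)
    (α : ℝ) (hα : 0 < α)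
    (xstar : EuclideanSpace ℝ (Fin N) → EuclideanSpace ℝ (Fin N))
    (hxstar : ∀ lam, IsMinOn (fun x => augLag N f α Z hZ x lam) Set.univ (xstar lam))
    (g : EuclideanSpace ℝ (Fin N) → ℝ)
    (hg : ∀ lam, g lam = augLag N f α Z hZ (xstar lam) lam)
    :
    ∀ lam₁ lam₂ : EuclideanSpace ℝ (Fin N),
      lam₂ - lam₁ ∈ LinearMap.range (Matrix.toEuclideanLin Z) →
      g lam₂ - g lam₁ ≤
        ⟪Matrix.toEuclideanLin hZ.sqrt (xstar lam₁), lam₂ - lam₁⟫ +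
          1 / (2 * (σ / (L + ρ * α))) *
            ‖Matrix.toEuclideanLin hZ.sqrt (xstar lam₁) -
              Matrix.toEuclideanLin hZ.sqrt (xstar lam₂)‖ ^ 2 := by
  intro lam₁ lam₂ _
  have hρσ : σ ≤ ρ := hρmax σ hσ
  have hden : 0 < L + ρ * α := by nlinarith
  have hcoef : 0 ≤ 1 / (2 * (σ / (L + ρ * α))) := by positivity
  have hmin := (hxstar lam₂) (mem_univ (xstar lam₁))
  simp only [augLag, Set.mem_setOf_eq, real_inner_comm lam₂] at hmin
  have key : g lam₂ - g lam₁ ≤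
      ⟪Matrix.toEuclideanLin hZ.sqrt (xstar lam₁), lam₂ - lam₁⟫ := by
    rw [hg, hg]
    simp only [augLag]
    rw [inner_sub_right, real_inner_comm lam₁, real_inner_comm lam₂]
    linarith
  nlinarith [sq_nonneg (‖Matrix.toEuclideanLin hZ.sqrt (xstar lam₁) -
      Matrix.toEuclideanLin hZ.sqrt (xstar lam₂)‖)]

end
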